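/- The point p_f = (0, 0, 0) is an equilibrium of Y, i.e. Y(0,0,0) = 0, and the Jacobian matrix DY(0,0,0) has characteristic polynomial (λ + φ₊(0,0))·(λ − (2k+1)·φ₊(0,0))·(λ − k·φ₊(0,0)); its eigenvalues are −φ₊(0,0) < 0, (2k+1)·φ₊(0,0) > 0 and k·φ₊(0,0) > 0. In particular p_f is fully hyperbolic, with two positive eigenvalues and one negative eigenvalue. -/

import Mathlib

open Polynomial

/-- The blown-up visible-fold vector field in the scaling chart `ε̄ = 1`
of the spherical blowup: `Y(ρ, r, x)`. -/
noncomputable def chartEVF (k : ℕ) (f₂ g₂ : ℝ × ℝ × ℝ → ℝ) (φp : ℝ × ℝ → ℝ)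
    (v : Fin 3 → ℝ) : Fin 3 → ℝ :=
  ![-v 0 *
      ((1 - v 0 ^ k * φp (v 0 ^ (2 * k) * v 1, v 0)) *
          (2 * v 2 + v 0 ^ k * v 1 * g₂ (v 0, v 1, v 2)) +
        φp (v 0 ^ (2 * k) * v 1, v 0)),
    (2 * (k : ℝ) + 1) * v 1 *
      ((1 - v 0 ^ k * φp (v 0 ^ (2 * k) * v 1, v 0)) *
          (2 * v 2 + v 0 ^ k * v 1 * g₂ (v 0, v 1, v 2)) +
        φp (v 0 ^ (2 * k) * v 1, v 0)),
    v 1 * (1 - v 0 ^ k * φp (v 0 ^ (2 * k) * v 1, v 0)) *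
        (1 + v 0 ^ k * f₂ (v 0, v 1, v 2)) +
      (k : ℝ) * v 2 *
        ((1 - v 0 ^ k * φp (v 0 ^ (2 * k) * v 1, v 0)) *
            (2 * v 2 + v 0 ^ k * v 1 * g₂ (v 0, v 1, v 2)) +
          φp (v 0 ^ (2 * k) * v 1, v 0))]

/-- The point `p_f = (0,0,0)` is an equilibrium of `Y`, and the Jacobian
`DY(0,0,0)` has characteristic polynomial
`(λ + φ₊(0,0))·(λ − (2k+1)·φ₊(0,0))·(λ − k·φ₊(0,0))`; its eigenvalues are
`−φ₊(0,0) < 0`, `(2k+1)·φ₊(0,0) > 0` and `k·φ₊(0,0) > 0`, so `p_f` is fully hyperbolic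
with two positive and one negative eigenvalue. -/
theorem visible_fold_pf_fully_hyperbolic (k : ℕ) (hk : 1 ≤ k)
    (f₂ g₂ : ℝ × ℝ × ℝ → ℝ) (φp : ℝ × ℝ → ℝ)
    (hf₂ : ContDiff ℝ 1 f₂) (hg₂ : ContDiff ℝ 1 g₂) (hφp : ContDiff ℝ 1 φp)
    (hpos : 0 < φp (0, 0)) :
    chartEVF k f₂ g₂ φp ![0, 0, 0] = 0 ∧
    (∃ J : Matrix (Fin 3) (Fin 3) ℝ,
      HasFDerivAt (chartEVF k f₂ g₂ φp)
        (LinearMap.toContinuousLinearMap (Matrix.toLin' J)) ![0, 0, 0] ∧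
      J.charpoly = (X + C (φp (0, 0))) * (X - C ((2 * (k : ℝ) + 1) * φp (0, 0))) *
        (X - C ((k : ℝ) * φp (0, 0)))) ∧
    -φp (0, 0) < 0 ∧ 0 < (2 * (k : ℝ) + 1) * φp (0, 0) ∧ 0 < (k : ℝ) * φp (0, 0) := by
  have hk0 : k ≠ 0 := Nat.one_le_iff_ne_zero.mp hk
  set c := φp (0, 0) with hc
  set p : Fin 3 → ℝ := ![0, 0, 0] with hp
  set J : Matrix (Fin 3) (Fin 3) ℝ :=
    !![-c, 0, 0; 0, (2 * (k : ℝ) + 1) * c, 0; 0, 1, (k : ℝ) * c] with hJ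
  set L := LinearMap.toContinuousLinearMap (Matrix.toLin' J) with hL
  have hLapp : ∀ (e : Fin 3 → ℝ) (i : Fin 3), L e i = (J.mulVec e) i := fun e i => rfl
  -- bracket function
  set B : (Fin 3 → ℝ) → ℝ := fun v =>
    (1 - v 0 ^ k * φp (v 0 ^ (2 * k) * v 1, v 0)) *
      (2 * v 2 + v 0 ^ k * v 1 * g₂ (v 0, v 1, v 2)) + φp (v 0 ^ (2 * k) * v 1, v 0)
    with hBdef
  set A : (Fin 3 → ℝ) → ℝ := fun v => 1 - v 0 ^ k * φp (v 0 ^ (2 * k) * v 1, v 0) with hAdef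
  set E : (Fin 3 → ℝ) → ℝ := fun v => 1 + v 0 ^ k * f₂ (v 0, v 1, v 2) with hEdef
  have hBval : B p = c := by simp [hBdef, hp, zero_pow hk0]; rfl
  have hAval : A p = 1 := by simp [hAdef, hp, zero_pow hk0]
  have hEval : E p = 1 := by simp [hEdef, hp, zero_pow hk0]
  have dφ := hφp.differentiable one_ne_zero
  have dg := hg₂.differentiable one_ne_zero
  have df := hf₂.differentiable one_ne_zero
  have hBdiff : DifferentiableAt ℝ B p := by fun_prop
  have hAdiff : DifferentiableAt ℝ A p := by fun_prop
  have hEdiff : DifferentiableAt ℝ E p := by fun_prop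
  have hproj := fun i : Fin 3 => hasFDerivAt_apply (𝕜 := ℝ) i p
  have hp0 : p 0 = 0 := rfl
  have hp1 : p 1 = 0 := rfl
  have hp2 : p 2 = 0 := rfl
  refine ⟨?_, ⟨J, ?_, ?_⟩, ?_, ?_, ?_⟩
  · funext i; fin_cases i <;> simp [chartEVF, hp, zero_pow hk0]
  · apply hasFDerivAt_pi''
    intro i
    fin_cases i
    · refine (((hproj 0).neg.mul hBdiff.hasFDerivAt).congr_fderiv ?_)
      ext e
      simp [hLapp, hJ, Matrix.mulVec, dotProduct, Fin.sum_univ_three, hp0, hBval]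
    · refine ((((hproj 1).const_mul (2 * (k : ℝ) + 1)).mul hBdiff.hasFDerivAt).congr_fderiv ?_)
      ext e
      simp [hLapp, hJ, Matrix.mulVec, dotProduct, Fin.sum_univ_three, hp1, hBval]
      ring
    · refine ((((((hproj 1).mul hAdiff.hasFDerivAt).mul hEdiff.hasFDerivAt)).add
        (((hproj 2).const_mul (k : ℝ)).mul hBdiff.hasFDerivAt)).congr_fderiv ?_)
      ext e
      simp [hLapp, hJ, Matrix.mulVec, dotProduct, Fin.sum_univ_three, hp1, hp2,
        hBval, hAval, hEval]
      ring
  · rw [Matrix.charpoly, Matrix.det_fin_three]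
    simp [hJ, Matrix.charmatrix_apply, hc]
  · linarith
  · positivity
  · have : (0:ℝ) < (k:ℝ) := by exact_mod_cast hk
    positivity
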